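/- (S_finish, S_2^≠, [0,1], [1/2, ∞))↓ holds: from every configuration in which robot r is in state S_finish with observed distance in [0,1] and robot s satisfies condition S_2^≠ with observed distance at least 1/2, every fair SSynch execution of Algorithm 1 solves rendezvous. -/

import Mathlib

/-- Points in the plane. -/
abbrev Pt := EuclideanSpace ℝ (Fin 2)

/-- Observed directions. -/
inductive Dir | left | right
deriving DecidableEq

/-- The six internal states of Algorithm 1. -/
inductive St | start | s1 | s2 (d : Dir) | s3 | finish
deriving DecidableEq

/-- A local coordinate frame: an orthogonal linear map of the plane. -/
abbrev Frame := Pt ≃ₗᵢ[ℝ] Pt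

/-- Observed direction of a local vector `v`: `right` if its first coordinate is
positive, or is zero with positive second coordinate; `left` otherwise. -/
noncomputable def obsDir (v : Pt) : Dir :=
  if 0 < v 0 ∨ (v 0 = 0 ∧ 0 < v 1) then Dir.right else Dir.left

/-- Local vector observed by a robot with unit distance `u` and frame `A`,
located at `p`, looking at the other robot at `q`. -/
noncomputable def obsVec (u : ℝ) (A : Frame) (p q : Pt) : Pt := u⁻¹ • (A (q - p))

/-- Observed distance. -/
noncomputable def obsDist (u : ℝ) (p q : Pt) : ℝ := ‖q - p‖ / u

/-- Algorithm 1: given the current state, the observed distance `d` and the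
observed direction `dir`, returns the new state and the coefficient `μ` such
that the (global) destination is `p + μ • (q - p)` (i.e. local destination `μ • v`). -/
noncomputable def algo1 (s : St) (d : ℝ) (dir : Dir) : St × ℝ :=
  if d = 0 then (s, 0)
  else match s with
  | .start => if d < 1 then (.s1, 1 - 1/d) else (.s2 dir, 1)
  | .s1 => if d ≤ 1 then (.finish, 0) else (.s2 dir, 1)
  | .s2 d' =>
      if dir = d' then (.finish, 1)
      else if d < 1/2 then (.finish, 0)
      else if d < 1 then (.s3, 1/2)
      else (.s2 d', 1/2)
  | .s3 => if d < 1/4 then (.finish, 0) else (.finish, 1)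
  | .finish => if d ≤ 1 then (.finish, 0) else (.finish, 1)

/-- A configuration: positions and internal states of the two robots
(robot `r` is `false`, robot `s` is `true`). -/
structure Config where
  pos : Bool → Pt
  st : Bool → St

/-- Result (new position, new state) of one activation of robot `i`. -/
noncomputable def stepRobot (u : Bool → ℝ) (A : Bool → Frame) (c : Config) (i : Bool) :
    Pt × St :=
  let p := c.pos i
  let q := c.pos (!i)
  let d := obsDist (u i) p q
  let dir := obsDir (obsVec (u i) (A i) p q)
  let r := algo1 (c.st i) d dir
  (p + r.2 • (q - p), r.1)

/-- One synchronous round in which exactly the robots `i` with `act i = true`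
are activated; both activated robots observe the same (pre-round) configuration,
and rigidly reach their computed destinations. -/
noncomputable def stepConfig (u : Bool → ℝ) (A : Bool → Frame) (act : Bool → Bool)
    (c : Config) : Config where
  pos i := if act i then (stepRobot u A c i).1 else c.pos i
  st i := if act i then (stepRobot u A c i).2 else c.st i

/-- The configuration after `n` rounds of the SSynch execution of Algorithm 1
under schedule `sched`, starting from `c0`. -/
noncomputable def run (u : Bool → ℝ) (A : Bool → Frame) (sched : ℕ → Bool → Bool)
    (c0 : Config) : ℕ → Config
  | 0 => c0
  | n + 1 => stepConfig u A (sched n) (run u A sched c0 n)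

/-- A legal fair SSynch schedule: at every round a nonempty set of robots is
activated, and each robot is activated infinitely often. -/
def FairSched (sched : ℕ → Bool → Bool) : Prop :=
  (∀ n, sched n false = true ∨ sched n true = true) ∧
  (∀ i n, ∃ m, n ≤ m ∧ sched m i = true)

/-- Rendezvous is solved: from some round on, the two robots occupy the same
point and never move again. -/
noncomputable def Solves (u : Bool → ℝ) (A : Bool → Frame) (sched : ℕ → Bool → Bool)
    (c0 : Config) : Prop :=
  ∃ N : ℕ, ∀ n, N ≤ n → ∀ i, (run u A sched c0 n).pos i = (run u A sched c0 N).pos false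

/-- Conditions on a robot: one of the six internal states, or `S₂⁼` / `S₂≠`. -/
inductive Cond | start | s1 | s2 (d : Dir) | s2eq | s2ne | s3 | finish

/-- A robot in state `s` whose currently observed direction is `dir`
satisfies the condition. -/
def Cond.sat : Cond → St → Dir → Prop
  | .start, s, _ => s = .start
  | .s1, s, _ => s = .s1
  | .s2 d', s, _ => s = .s2 d'
  | .s2eq, s, dir => s = .s2 dir
  | .s2ne, s, dir => ∃ d', s = St.s2 d' ∧ d' ≠ dir
  | .s3, s, _ => s = .s3
  | .finish, s, _ => s = .finish

/-- `(S_a, S_b, I_a, I_b)↓` : for every choice of the units and frames, from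
every configuration in which robot `r` satisfies condition `Ca` with observed
distance in `Ia` and robot `s` satisfies condition `Cb` with observed distance
in `Ib`, every fair SSynch execution of Algorithm 1 solves Rendezvous. -/
noncomputable def Down (Ca Cb : Cond) (Ia Ib : Set ℝ) : Prop :=
  ∀ (u : Bool → ℝ) (A : Bool → Frame), (∀ i, 0 < u i) →
    ∀ c0 : Config,
      Ca.sat (c0.st false)
        (obsDir (obsVec (u false) (A false) (c0.pos false) (c0.pos true))) →
      obsDist (u false) (c0.pos false) (c0.pos true) ∈ Ia →
      Cb.sat (c0.st true)
        (obsDir (obsVec (u true) (A true) (c0.pos true) (c0.pos false))) →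
      obsDist (u true) (c0.pos true) (c0.pos false) ∈ Ib →
      ∀ sched : ℕ → Bool → Bool, FairSched sched → Solves u A sched c0


/-!
Robot `r` sits in `S_finish` and sees `s` within unit distance, so it stays put as long as `s`
only moves towards it. Robot `s`, in `S_2` with the wrong direction recorded, moves halfway to `r`
at each activation; it stays on the same ray towards `r`, so its observed direction, hence the
mismatch, is preserved. Once its distance drops below `1` it enters `S_3` at distance at least
`1/4`, and its next activation takes it onto `r`, where neither robot moves again. Counting the
halvings still needed gives a rank that drops at each activation of `s`, so fairness drives it
to `0`.
-/

lemma obsDir_smul {v : Pt} {c : ℝ} (hc : 0 < c) : obsDir (c • v) = obsDir v := by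
  simp only [obsDir, PiLp.smul_apply, smul_eq_mul, mul_pos_iff_of_pos_left hc, mul_eq_zero,
    hc.ne', false_or]

lemma obsDist_le_one_iff {u : ℝ} (hu : 0 < u) {p q : Pt} : obsDist u p q ≤ 1 ↔ ‖p - q‖ ≤ u := by
  rw [obsDist, div_le_one hu, norm_sub_rev]

section Toward

variable {u μ : ℝ} {p q : Pt}

lemma sub_add_smul_sub {V : Type*} [AddCommGroup V] [Module ℝ V] (p q : V) (μ : ℝ) :
    q - (p + μ • (q - p)) = (1 - μ) • (q - p) := by
  module

lemma norm_sub_add_smul_sub_le (h0 : 0 ≤ μ) (h1 : μ ≤ 1) :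
    ‖q - (p + μ • (q - p))‖ ≤ ‖q - p‖ := by
  rw [sub_add_smul_sub, norm_smul, Real.norm_of_nonneg (by linarith)]
  exact mul_le_of_le_one_left (norm_nonneg _) (by linarith)

lemma obsDist_add_smul_sub (hμ : μ ≤ 1) :
    obsDist u (p + μ • (q - p)) q = (1 - μ) * obsDist u p q := by
  rw [obsDist, obsDist, sub_add_smul_sub, norm_smul, Real.norm_of_nonneg (by linarith),
    mul_div_assoc]

lemma obsDir_obsVec_add_smul_sub (hμ : μ < 1) (A : Frame) :
    obsDir (obsVec u A (p + μ • (q - p)) q) = obsDir (obsVec u A p q) := by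
  rw [obsVec, obsVec, sub_add_smul_sub, map_smul, smul_comm, obsDir_smul (by linarith)]

end Toward

section Algo1

variable {d : ℝ} {dir d' : Dir}

lemma algo1_zero (s : St) (dir : Dir) : algo1 s 0 dir = (s, 0) := by
  simp [algo1]

lemma algo1_finish_of_le_one (hd : d ≤ 1) : algo1 .finish d dir = (.finish, 0) := by
  rcases eq_or_ne d 0 with h | h <;> simp [algo1, h, hd]

lemma algo1_s3_of_le (hd : 1/4 ≤ d) : algo1 .s3 d dir = (.finish, 1) := by
  simp [algo1, (by positivity : d ≠ 0), (by linarith : ¬ d < 4⁻¹)]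

lemma algo1_s2_of_ne_of_lt_one (h1 : 1/2 ≤ d) (h2 : d < 1) (hne : dir ≠ d') :
    algo1 (.s2 d') d dir = (.s3, 1/2) := by
  simp [algo1, (by positivity : d ≠ 0), hne, h2, (by linarith : ¬ d < 2⁻¹)]

lemma algo1_s2_of_ne_of_one_le (h1 : 1 ≤ d) (hne : dir ≠ d') :
    algo1 (.s2 d') d dir = (.s2 d', 1/2) := by
  simp [algo1, (by positivity : d ≠ 0), hne, not_lt.2 h1, (by linarith : ¬ d < 2⁻¹)]

end Algo1

noncomputable def activate (u : ℝ) (A : Frame) (p q : Pt) (s : St) : Pt × St :=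
  let r := algo1 s (obsDist u p q) (obsDir (obsVec u A p q))
  (p + r.2 • (q - p), r.1)

lemma stepRobot_eq_activate (u : Bool → ℝ) (A : Bool → Frame) (c : Config) (i : Bool) :
    stepRobot u A c i = activate (u i) (A i) (c.pos i) (c.pos (!i)) (c.st i) :=
  rfl

section Activate

variable {u : ℝ} {A : Frame} {p q : Pt}

lemma activate_self (s : St) : activate u A p p s = (p, s) := by
  simp [activate, obsDist, algo1_zero]

lemma activate_finish (hd : obsDist u p q ≤ 1) : activate u A p q .finish = (p, .finish) := by
  simp [activate, algo1_finish_of_le_one hd]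

end Activate

/-- Rank of a robot at `p` in state `s` on its way to `P`: `0` once it is at `P` in `S_finish`,
`1` in `S_3` at distance at least `1/4`, and `j + 2` in `S_2^≠` at a distance in `[1/2, 2^j)`. -/
def Phase (u : ℝ) (A : Frame) (P : Pt) : ℕ → Pt → St → Prop
  | 0, p, s => p = P ∧ s = .finish
  | 1, p, s => s = .s3 ∧ 1/4 ≤ obsDist u p P
  | j + 2, p, s => (∃ d', s = .s2 d' ∧ d' ≠ obsDir (obsVec u A p P)) ∧
      1/2 ≤ obsDist u p P ∧ obsDist u p P < 2 ^ j

lemma exists_phase_activate {u : ℝ} {A : Frame} {P p : Pt} {s : St} {k : ℕ}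
    (h : Phase u A P (k + 1) p s) :
    ∃ k' ≤ k, Phase u A P k' (activate u A p P s).1 (activate u A p P s).2 ∧
      ‖P - (activate u A p P s).1‖ ≤ ‖P - p‖ := by
  cases k with
  | zero =>
    obtain ⟨rfl, hd⟩ := h
    refine ⟨0, le_rfl, ?_⟩
    simp [activate, algo1_s3_of_le hd, Phase]
  | succ j =>
    obtain ⟨⟨d', rfl, hne⟩, hlo, hhi⟩ := h
    set m := p + (1/2 : ℝ) • (P - p)
    have hdir : obsDir (obsVec u A m P) = obsDir (obsVec u A p P) :=
      obsDir_obsVec_add_smul_sub (by norm_num) A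
    have hdist : obsDist u m P = (1 - 1/2) * obsDist u p P := obsDist_add_smul_sub (by norm_num)
    have hnorm : ‖P - m‖ ≤ ‖P - p‖ := norm_sub_add_smul_sub_le (by norm_num) (by norm_num)
    rcases lt_or_ge (obsDist u p P) 1 with hlt | hge
    · rw [activate, algo1_s2_of_ne_of_lt_one hlo hlt (Ne.symm hne)]
      refine ⟨1, by omega, ⟨rfl, ?_⟩, hnorm⟩
      rw [hdist]; linarith
    · obtain _ | i := j
      · norm_num at hhi
        linarith
      rw [activate, algo1_s2_of_ne_of_one_le hge (Ne.symm hne)]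
      refine ⟨i + 2, le_rfl, ⟨⟨d', rfl, ?_⟩, ?_, ?_⟩, hnorm⟩
      · rwa [hdir]
      · rw [hdist]; linarith
      · rw [hdist]; rw [pow_succ] at hhi; linarith

def Approaching (u : Bool → ℝ) (A : Bool → Frame) (P : Pt) (k : ℕ) (c : Config) : Prop :=
  c.pos false = P ∧ c.st false = .finish ∧ ‖P - c.pos true‖ ≤ u false ∧
    Phase (u true) (A true) P k (c.pos true) (c.st true)

namespace Approaching

variable {u : Bool → ℝ} {A : Bool → Frame} {P : Pt} {k : ℕ} {c : Config} {act : Bool → Bool}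

lemma pos_eq (h : Approaching u A P 0 c) (i : Bool) : c.pos i = P := by
  cases i
  exacts [h.1, h.2.2.2.1]

lemma stepConfig_false (hu : 0 < u false) (h : Approaching u A P k c) :
    (stepConfig u A act c).pos false = P ∧ (stepConfig u A act c).st false = .finish := by
  obtain ⟨hr, hst, hnorm, -⟩ := h
  have hrest : stepRobot u A c false = (P, .finish) := by
    rw [stepRobot_eq_activate, hst, hr]
    exact activate_finish ((obsDist_le_one_iff hu).2 hnorm)
  cases act false <;> simp [stepConfig, hrest, hr, hst]

lemma stepConfig_of_idle (hu : 0 < u false) (h : Approaching u A P k c)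
    (hact : act true = false) : Approaching u A P k (stepConfig u A act c) := by
  obtain ⟨hr, hst⟩ := h.stepConfig_false hu (act := act)
  refine ⟨hr, hst, ?_⟩
  simpa only [stepConfig, hact, Bool.false_eq_true, if_false] using h.2.2

lemma stepConfig_zero (hu : 0 < u false) (h : Approaching u A P 0 c) :
    Approaching u A P 0 (stepConfig u A act c) := by
  obtain ⟨hr, hst⟩ := h.stepConfig_false hu (act := act)
  have hs : stepRobot u A c true = (c.pos true, c.st true) := by
    rw [stepRobot_eq_activate, Bool.not_true, h.pos_eq, h.pos_eq, activate_self]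
  cases hact : act true
  · exact h.stepConfig_of_idle hu hact
  · refine ⟨hr, hst, ?_⟩
    simpa only [stepConfig, hact, if_true, hs] using h.2.2

lemma stepConfig_of_active (hu : 0 < u false) (h : Approaching u A P (k + 1) c)
    (hact : act true = true) : ∃ k' ≤ k, Approaching u A P k' (stepConfig u A act c) := by
  obtain ⟨hr, hst⟩ := h.stepConfig_false hu (act := act)
  obtain ⟨k', hk', hphase, hnorm⟩ := exists_phase_activate h.2.2.2
  have hs : stepRobot u A c true = activate (u true) (A true) (c.pos true) P (c.st true) := by
    rw [stepRobot_eq_activate, Bool.not_true, h.1]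
  refine ⟨k', hk', hr, hst, ?_, ?_⟩ <;> simp only [stepConfig, hact, if_true, hs]
  exacts [hnorm.trans h.2.2.1, hphase]

end Approaching

section Rank

variable {α : Type*} {x : ℕ → α} {I : ℕ → α → Prop} {good : ℕ → Prop}

lemma exists_rank_le_of_good
    (hwait : ∀ n k, I (k + 1) (x n) → ¬ good n → I (k + 1) (x (n + 1)))
    (hprog : ∀ n k, I (k + 1) (x n) → good n → ∃ k' ≤ k, I k' (x (n + 1))) (k : ℕ) :
    ∀ m n, I (k + 1) (x n) → good (n + m) → ∃ k' ≤ k, ∃ N, I k' (x N) := by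
  have hnow : ∀ n, I (k + 1) (x n) → good n → ∃ k' ≤ k, ∃ N, I k' (x N) := fun n hn hg =>
    let ⟨k', hk', h⟩ := hprog n k hn hg
    ⟨k', hk', _, h⟩
  intro m
  induction m with
  | zero => exact hnow
  | succ m ih =>
    intro n hn hgood
    by_cases hg : good n
    · exact hnow n hn hg
    · exact ih (n + 1) (hwait n k hn hg) (by rwa [Nat.add_right_comm, Nat.add_assoc])

lemma exists_rank_zero (hgood : ∀ n, ∃ m, n ≤ m ∧ good m)
    (hwait : ∀ n k, I (k + 1) (x n) → ¬ good n → I (k + 1) (x (n + 1)))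
    (hprog : ∀ n k, I (k + 1) (x n) → good n → ∃ k' ≤ k, I k' (x (n + 1))) :
    ∀ k n, I k (x n) → ∃ N, I 0 (x N) := by
  intro k
  induction k using Nat.strong_induction_on with
  | _ k ih =>
    intro n hn
    cases k with
    | zero => exact ⟨n, hn⟩
    | succ k =>
      obtain ⟨m, hnm, hm⟩ := hgood n
      obtain ⟨k', hk', N, hN⟩ := exists_rank_le_of_good hwait hprog k (m - n) n hn
        (by rwa [Nat.add_sub_cancel' hnm])
      exact ih k' (Nat.lt_succ_of_le hk') N hN

end Rank

/-- Lemma 4: `(S_finish, S_2^≠, [0,1], [1/2, ∞))↓`. -/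
theorem lemma_l5 :
    Down Cond.finish Cond.s2ne (Set.Icc (0 : ℝ) 1) (Set.Ici (1/2 : ℝ)) := by
  rintro u A hu c0 hr ⟨-, hdr⟩ ⟨d', hst, hne⟩ hds sched hfair
  set P := c0.pos false
  obtain ⟨j, hj⟩ := pow_unbounded_of_one_lt (obsDist (u true) (c0.pos true) P) one_lt_two
  have hinit : Approaching u A P (j + 2) c0 :=
    ⟨rfl, hr, (obsDist_le_one_iff (hu false)).1 hdr, ⟨d', hst, hne⟩, hds, hj⟩
  obtain ⟨N, hN⟩ := exists_rank_zero (x := run u A sched c0) (hfair.2 true)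
    (fun _ _ h hidle => h.stepConfig_of_idle (hu false) (Bool.eq_false_iff.2 hidle))
    (fun _ _ h hact => h.stepConfig_of_active (hu false) hact) _ 0 hinit
  have hstay : ∀ n, N ≤ n → Approaching u A P 0 (run u A sched c0 n) := fun n hn =>
    Nat.le_induction hN (fun _ _ h => h.stepConfig_zero (hu false)) n hn
  exact ⟨N, fun n hn i => by rw [(hstay n hn).pos_eq, hN.pos_eq]⟩
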